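/- arXiv:1905.10634 — 3 statements merged into one kernel-verified Lean document; each statement's English description precedes it below -/
import Mathlib

section
/- Let d ≥ 1 and let μ be a probability measure on ℝ^d × ℝ. Let l, m, u : ℝ^d → ℝ be fixed measurable functions with l(x) < m(x) < u(x) for all x. Let (X₁,Y₁),…,(X_n,Y_n),(X,Y) be i.i.d. with law μ. For a pair (x,y) define the conformity score c(x,y) = max((m(x) − y)/(m(x) − l(x)), (y − m(x))/(u(x) − m(x))), and set cᵢ = c(Xᵢ,Yᵢ) and c' = c(X,Y). Assume the law of c' is atomless. Let α ∈ (0,1), k = ⌈(1−α)(n+1)⌉ with k ≤ n, and let ĉ = c₍ₖ₎ be the k-th smallest of c₁,…,c_n. Then P( m(X) − ĉ·(m(X) − l(X)) ≤ Y ≤ m(X) + ĉ·(u(X) − m(X)) ) ≥ 1 − α. -/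
/-! The scores of the `n` calibration points and of the test point are i.i.d. with an atomless
law, so almost surely there are no ties and, by exchangeability, the rank of the test score
among all `n + 1` scores is uniform on `{0, …, n}`. Hence the test score has rank `< k` with
probability `k / (n + 1) ≥ 1 - α`, and on that event it is at most the `k`-th smallest
calibration score `ĉ`, which says exactly that `Y` lies in the `ĉ`-expanded interval. -/

open MeasureTheory ProbabilityTheory

/-- The `k`-th smallest entry (zero-indexed `k : Fin n`) of a tuple `v : Fin n → ℝ`. -/
noncomputable def kthSmallest {n : ℕ} (v : Fin n → ℝ) (k : Fin n) : ℝ :=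
  v (Tuple.sort v k)

open Finset
open scoped ENNReal

namespace Tuple

variable {α : Type*} [LinearOrder α] {N : ℕ}

def rank (v : Fin N → α) (j : Fin N) : ℕ := #{i | v i < v j}

lemma rank_lt_rank {v : Fin N → α} {i j : Fin N} (h : v i < v j) : rank v i < rank v j := by
  refine card_lt_card ⟨monotone_filter_right _ fun _ _ hi => hi.trans h, fun hsub => ?_⟩
  simpa using hsub (by simpa using h : i ∈ ({i' | v i' < v j} : Finset _))

lemma rank_lt (v : Fin N → α) (j : Fin N) : rank v j < N := by
  simpa [rank] using card_lt_card (filter_ssubset.2 ⟨j, mem_univ j, lt_irrefl (v j)⟩)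

lemma rank_injective {v : Fin N → α} (hv : Function.Injective v) :
    Function.Injective fun j => (⟨rank v j, rank_lt v j⟩ : Fin N) := by
  intro i j hij
  simp only [Fin.mk.injEq] at hij
  by_contra hne
  rcases lt_or_gt_of_ne (hv.ne hne) with h | h
  · exact (rank_lt_rank h).ne hij
  · exact (rank_lt_rank h).ne' hij

lemma card_rank_lt {v : Fin N → α} (hv : Function.Injective v) {k : ℕ} (hk : k ≤ N) :
    #{j | rank v j < k} = k := by
  let e := Equiv.ofBijective _ (rank_injective hv).bijective_of_finite
  calc #{j | rank v j < k} = #{c : Fin N | c < k} := card_equiv e (by simp [e])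
    _ = k := by rw [Fin.card_filter_val_lt, min_eq_right hk]

lemma rank_comp_perm (v : Fin N → α) (e : Equiv.Perm (Fin N)) (j : Fin N) :
    rank (v ∘ e) j = rank v (e j) :=
  card_equiv e (by simp)

lemma rank_last {n : ℕ} (v : Fin (n + 1) → α) :
    rank v (Fin.last n) = #{i : Fin n | v i.castSucc < v (Fin.last n)} := by
  simp only [rank, card_filter, Fin.sum_univ_castSucc, lt_irrefl, if_false, add_zero]

end Tuple

open Tuple

lemma le_kthSmallest_of_card_filter_lt_le {n : ℕ} (w : Fin n → ℝ) (t : ℝ) (k : Fin n)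
    (h : #{i | w i < t} ≤ k) : t ≤ kthSmallest w k := by
  by_contra! hlt
  have hIic : Iic k ⊆ ({j | w (Tuple.sort w j) < t} : Finset (Fin n)) := fun j hj =>
    mem_filter.2 ⟨mem_univ _, (Tuple.monotone_sort w (mem_Iic.1 hj)).trans_lt hlt⟩
  have hcard : #{j | w (Tuple.sort w j) < t} = #{i | w i < t} :=
    card_equiv (Tuple.sort w) (by simp)
  have := card_le_card hIic
  rw [Fin.card_Iic, hcard] at this
  omega

lemma max_div_le_iff_sub_mul_le_and_le_add_mul {l m u y c : ℝ} (hlm : l < m) (hmu : m < u) :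
    max ((m - y) / (m - l)) ((y - m) / (u - m)) ≤ c ↔
      m - c * (m - l) ≤ y ∧ y ≤ m + c * (u - m) := by
  rw [max_le_iff, div_le_iff₀ (sub_pos.2 hlm), div_le_iff₀ (sub_pos.2 hmu)]
  constructor <;> rintro ⟨h₁, h₂⟩ <;> constructor <;> linarith

lemma MeasureTheory.Measure.prod_setOf_fst_eq_snd {α : Type*} [MeasurableSpace α]
    [MeasurableEq α] (μ ν : Measure α) [SFinite ν] [NullSingletonClass ν] :
    (μ.prod ν) {p | p.1 = p.2} = 0 := by
  rw [Measure.prod_apply (measurableSet_eq_fun measurable_fst measurable_snd)]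
  simp [Set.preimage]

lemma ProbabilityTheory.IndepFun.measure_eq_eq_zero {Ω α : Type*} [MeasurableSpace Ω]
    [MeasurableSpace α] [MeasurableEq α] {P : Measure Ω} [IsFiniteMeasure P] {X Y : Ω → α}
    (hX : Measurable X) (hY : Measurable Y) (hXY : IndepFun X Y P)
    [NullSingletonClass (P.map Y)] :
    P {ω | X ω = Y ω} = 0 := by
  have hdiag := measurableSet_eq_fun (α := α × α) measurable_fst measurable_snd
  rw [← Measure.prod_setOf_fst_eq_snd (P.map X) (P.map Y),
    ← (indepFun_iff_map_prod_eq_prod_map_map hX.aemeasurable hY.aemeasurable).1 hXY,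
    Measure.map_apply (hX.prodMk hY) hdiag]
  rfl

lemma MeasureTheory.Measure.ae_injective_pi {ι α : Type*} [Fintype ι] [MeasurableSpace α]
    [MeasurableEq α] (ν : Measure α) [IsProbabilityMeasure ν] [NullSingletonClass ν] :
    ∀ᵐ v ∂Measure.pi (fun _ : ι => ν), Function.Injective v := by
  have hindep := iIndepFun_pi (μ := fun _ : ι => ν) (X := fun _ => id) fun _ => aemeasurable_id
  have (j : ι) : NullSingletonClass ((Measure.pi fun _ : ι => ν).map fun v => v j) := by
    rw [(measurePreserving_eval _ j).map_eq]; infer_instance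
  have hpair (i j : ι) : ∀ᵐ v ∂Measure.pi (fun _ : ι => ν), v i = v j → i = j := by
    by_cases hij : i = j
    · exact .of_forall fun _ _ => hij
    · refine measure_mono_null (fun v hv => ?_) ((hindep.indepFun hij).measure_eq_eq_zero
        (measurable_pi_apply i) (measurable_pi_apply j))
      simpa [hij] using hv
  simpa [Function.Injective, ae_all_iff] using hpair

lemma MeasureTheory.Measure.pi_preimage_comp_perm {ι α : Type*} [Fintype ι] [MeasurableSpace α]
    (ν : Measure α) [SigmaFinite ν] (e : Equiv.Perm ι) (s : Set (ι → α)) :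
    Measure.pi (fun _ => ν) ((· ∘ e) ⁻¹' s) = Measure.pi (fun _ => ν) s :=
  (measurePreserving_arrowCongr' (fun _ => ν) (fun _ => ν) e.symm (.refl α) fun _ =>
    .id ν).measure_preimage_equiv s

lemma measurableSet_rank_lt {N : ℕ} (j : Fin N) (k : ℕ) :
    MeasurableSet {v : Fin N → ℝ | rank v j < k} := by
  have : Measurable fun v : Fin N → ℝ => rank v j := by
    simp_rw [rank, card_filter]
    exact Finset.measurable_sum _ fun i _ =>
      Measurable.ite (measurableSet_lt (measurable_pi_apply i) (measurable_pi_apply j))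
        measurable_const measurable_const
  exact this measurableSet_Iio

/-- By exchangeability all ranks have the same law, and almost surely exactly `k` of them are
below `k`. -/
lemma measure_rank_lt_eq_div {N : ℕ} (ν : Measure ℝ) [IsProbabilityMeasure ν]
    [NullSingletonClass ν] {k : ℕ} (hk : k ≤ N) (j : Fin N) :
    Measure.pi (fun _ => ν) {v | rank v j < k} = k / N := by
  set π := Measure.pi fun _ : Fin N => ν
  have hexch (i : Fin N) : π {v | rank v i < k} = π {v | rank v j < k} := by
    rw [← Measure.pi_preimage_comp_perm ν (Equiv.swap j i)]
    congr! 2 with v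
    simp [rank_comp_perm]
  have hsum : ∑ i, π {v | rank v i < k} = k := calc
    ∑ i, π {v | rank v i < k}
      = ∫⁻ v, ∑ i, {v | rank v i < k}.indicator 1 v ∂π := by
        rw [lintegral_finsetSum _ fun i _ =>
          measurable_one.indicator (measurableSet_rank_lt i k)]
        simp_rw [lintegral_indicator_one (measurableSet_rank_lt _ k)]
    _ = ∫⁻ _, (k : ℝ≥0∞) ∂π := by
        refine lintegral_congr_ae ((Measure.ae_injective_pi ν).mono fun v hv => ?_)
        simp [Set.indicator_apply, card_rank_lt hv hk]
    _ = k := by simp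
  rw [Finset.sum_congr rfl fun i _ => hexch i, sum_const, card_univ, Fintype.card_fin,
    nsmul_eq_mul] at hsum
  rw [ENNReal.eq_div_iff (by simpa using j.pos.ne') (ENNReal.natCast_ne_top N), hsum]

/-- Split-conformal coverage conditional on the trained
predictor: with fixed measurable `l < m < u` on `ℝ^d`, i.i.d. pairs
`(X₁,Y₁),…,(Xₙ,Yₙ),(X,Y)` with law `μ`, conformity scores
`c(x,y) = max((m(x)-y)/(m(x)-l(x)), (y-m(x))/(u(x)-m(x)))` whose law is
atomless, `k = ⌈(1-α)(n+1)⌉ ≤ n`, and `ĉ = c₍ₖ₎`, the expanded interval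
`[m(X) - ĉ(m(X)-l(X)), m(X) + ĉ(u(X)-m(X))]` covers `Y` with probability
at least `1 - α`. -/
theorem split_conformal_coverage_fixed_predictor
    {Ω : Type*} [MeasurableSpace Ω] (P : Measure Ω) [IsProbabilityMeasure P]
    (d n : ℕ)
    (μ : Measure ((Fin d → ℝ) × ℝ)) [IsProbabilityMeasure μ]
    (l m u : (Fin d → ℝ) → ℝ)
    (hl : Measurable l) (hm : Measurable m) (hu : Measurable u)
    (hord : ∀ x, l x < m x ∧ m x < u x)
    (W : Fin (n + 1) → Ω → (Fin d → ℝ) × ℝ)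
    (hWmeas : ∀ i, Measurable (W i))
    (hWindep : iIndepFun W P)
    (hWlaw : ∀ i, P.map (W i) = μ)
    (score : (Fin d → ℝ) × ℝ → ℝ)
    (hscore : score = fun p =>
      max ((m p.1 - p.2) / (m p.1 - l p.1)) ((p.2 - m p.1) / (u p.1 - m p.1)))
    (hatomless : ∀ y : ℝ, μ {p | score p = y} = 0)
    (α : ℝ)
    (k : ℕ) (hk : k = ⌈(1 - α) * ((n : ℝ) + 1)⌉₊) (hk1 : 1 ≤ k) (hkn : k ≤ n)
    (chat : Ω → ℝ)
    (hchat : chat = fun ω =>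
      kthSmallest (fun i : Fin n => score (W i.castSucc ω)) ⟨k - 1, by omega⟩) :
    1 - α ≤ (P {ω |
      m (W (Fin.last n) ω).1 -
          chat ω * (m (W (Fin.last n) ω).1 - l (W (Fin.last n) ω).1) ≤
        (W (Fin.last n) ω).2 ∧
      (W (Fin.last n) ω).2 ≤
        m (W (Fin.last n) ω).1 +
          chat ω * (u (W (Fin.last n) ω).1 - m (W (Fin.last n) ω).1)}).toReal := by
  have hscore_meas : Measurable score := by
    rw [hscore]; fun_prop
  set ν := μ.map score
  have : IsProbabilityMeasure ν := Measure.isProbabilityMeasure_map hscore_meas.aemeasurable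
  have : NullSingletonClass ν := ⟨fun y => by
    rw [Measure.map_apply hscore_meas (measurableSet_singleton y)]; exact hatomless y⟩
  set scores : Ω → Fin (n + 1) → ℝ := fun ω i => score (W i ω)
  have hlaw : P.map scores = Measure.pi fun _ => ν := by
    refine ((hWindep.comp (fun _ => score) fun _ => hscore_meas).map_fun_eq_pi_map
      fun i => (hscore_meas.comp (hWmeas i)).aemeasurable).trans ?_
    congr! with i
    rw [← Measure.map_map hscore_meas (hWmeas i), hWlaw i]
  have hcover (ω : Ω) (hω : rank (scores ω) (Fin.last n) < k) :
      score (W (Fin.last n) ω) ≤ chat ω := by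
    rw [hchat]
    apply le_kthSmallest_of_card_filter_lt_le
    simp only [rank_last, scores] at hω
    dsimp only
    omega
  calc 1 - α ≤ (k : ℝ) / (n + 1) := by
        rw [le_div_iff₀ (by positivity), hk]; exact Nat.le_ceil _
    _ = (P (scores ⁻¹' {v | rank v (Fin.last n) < k})).toReal := by
        rw [← Measure.map_apply (by fun_prop) (measurableSet_rank_lt _ _), hlaw,
          measure_rank_lt_eq_div ν (by omega), ENNReal.toReal_div, ENNReal.toReal_natCast,
          ENNReal.toReal_natCast, Nat.cast_succ]
    _ ≤ _ := by
        refine ENNReal.toReal_mono (measure_ne_top _ _) (measure_mono fun ω hω => ?_)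
        refine (max_div_le_iff_sub_mul_le_and_le_add_mul (hord _).1 (hord _).2).1 ?_
        simpa only [hscore] using hcover ω hω
end

section
/- Let d ≥ 1, let μ be a probability measure on ℝ^d × ℝ, and let D₁ = ((X₁,Y₁),…,(X_{n₁},Y_{n₁})), D₂ = ((X'₁,Y'₁),…,(X'_{n₂},Y'_{n₂})), and (X,Y) be i.i.d. with law μ. Let G ⊆ [0,1] be a finite set with 0 ∈ G and |G| = K+1. For each τ ∈ G let L_τ, U_τ : (ℝ^d × ℝ)^{n₁} × ℝ^d → [−∞,∞] be measurable, where L₀ ≡ −∞ and U₀ ≡ +∞. Let α ∈ (0,1). Define the empirical coverage p̂(τ) = (1/n₂)·#{ i ≤ n₂ : L_τ(D₁, X'ᵢ) ≤ Y'ᵢ ≤ U_τ(D₁, X'ᵢ) }, and let τ̂ = max{ τ ∈ G : p̂(τ) ≥ 1−α } (well-defined since p̂(0) = 1). Let p(D) = P( L_{τ̂}(D₁, X) ≤ Y ≤ U_{τ̂}(D₁, X) | D₁, D₂ ). Then for every ε > 0, P( p(D) ≤ 1 − α − ε ) ≤ K·exp(−2ε²n₂). -/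
/-!
If the selected level `τ̂` has true coverage at most `1 - α - ε`, then `τ̂ ≠ 0` (the level `0`
covers everything), and at `τ̂` the holdout coverage, which is at least `1 - α`, exceeds the true
coverage by `ε`. So the bad event lies in the union, over the `K` nonzero grid points `τ`, of the
events that the holdout coverage of the *fixed* interval predictor for `τ` overshoots its true
coverage by `ε`. The holdout data are independent of the training data, so conditionally on `D₁`
the holdout count is a sum of `n₂` i.i.d. Bernoulli variables, and Hoeffding's inequality bounds
each of these events by `exp (-2 ε² n₂)`.
-/

open MeasureTheory ProbabilityTheory Real

lemma Set.ncard_setOf_mem_eq_sum_indicator {ι α : Type*} [Fintype ι] (s : Set α) (f : ι → α) :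
    ({i | f i ∈ s}.ncard : ℝ) = ∑ i, s.indicator 1 (f i) := by
  classical
  rw [Set.ncard_eq_toFinset_card', Set.toFinset_ofPred, Finset.natCast_card_filter]
  simp [Set.indicator_apply]

lemma measureReal_pi_ncard_ge_le {E : Type*} [MeasurableSpace E] (κ : Measure E)
    [IsProbabilityMeasure κ] {S : Set E} (hS : MeasurableSet S) (n : ℕ) {ε : ℝ} (hε : 0 ≤ ε) :
    (Measure.pi fun _ : Fin n => κ).real {b | n * (κ.real S + ε) ≤ {i | b i ∈ S}.ncard}
      ≤ exp (-2 * ε ^ 2 * n) := by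
  have hind : Measurable (S.indicator (1 : E → ℝ)) := measurable_one.indicator hS
  have hsubG : ∀ i : Fin n, HasSubgaussianMGF (fun b => S.indicator 1 (b i) - κ.real S)
      (1 / 4) (Measure.pi fun _ : Fin n => κ) := by
    intro i
    have hmean : ∫ b, S.indicator (1 : E → ℝ) (b i) ∂(Measure.pi fun _ : Fin n => κ)
        = κ.real S := by
      rw [integral_comp_eval hind.aestronglyMeasurable, integral_indicator_one hS]
    have := hasSubgaussianMGF_of_mem_Icc (μ := Measure.pi fun _ : Fin n => κ)
      (X := fun b => S.indicator 1 (b i)) (a := 0) (b := 1)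
      (hind.comp (measurable_pi_apply i)).aemeasurable
      (ae_of_all _ fun b => ⟨Set.indicator_nonneg (fun _ _ => zero_le_one) _,
        Set.indicator_le_self' (fun _ _ => zero_le_one) _⟩)
    rw [hmean] at this
    convert this
    norm_num
  have hindep : iIndepFun (fun i (b : Fin n → E) => S.indicator 1 (b i) - κ.real S)
      (Measure.pi fun _ : Fin n => κ) :=
    iIndepFun_pi (X := fun _ q => S.indicator 1 q - κ.real S)
      fun _ => (hind.sub_const _).aemeasurable
  have hoeffding := HasSubgaussianMGF.measure_sum_ge_le_of_iIndepFun hindep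
    (fun i _ => hsubG i) (s := Finset.univ) (mul_nonneg n.cast_nonneg hε)
  have hset : {b : Fin n → E | n * (κ.real S + ε) ≤ {i | b i ∈ S}.ncard}
      = {b | n * ε ≤ ∑ i, (S.indicator 1 (b i) - κ.real S)} := by
    ext b
    simp only [Set.mem_ofPred_eq, Set.ncard_setOf_mem_eq_sum_indicator, Finset.sum_sub_distrib,
      Finset.sum_const, Finset.card_univ, Fintype.card_fin, nsmul_eq_mul]
    constructor <;> intro h <;> linarith
  rw [hset]
  refine hoeffding.trans_eq (congrArg exp ?_)
  rcases n.eq_zero_or_pos with rfl | hn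
  · simp
  · simp only [Finset.sum_const, Finset.card_univ, Fintype.card_fin, nsmul_eq_mul]
    push_cast
    field_simp
    ring

lemma measureReal_ncard_ge_le_of_indepFun {Ω A E : Type*} [MeasurableSpace Ω]
    [MeasurableSpace A] [MeasurableSpace E] {P : Measure Ω} [IsProbabilityMeasure P]
    {κ : Measure E} [IsProbabilityMeasure κ] {n : ℕ} {X : Ω → A} {Y : Ω → Fin n → E}
    (hX : Measurable X) (hY : Measurable Y) (hXY : IndepFun X Y P)
    (hYlaw : P.map Y = Measure.pi fun _ => κ) {S : Set (A × E)} (hS : MeasurableSet S)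
    {ε : ℝ} (hε : 0 ≤ ε) :
    P.real {ω | n * (κ.real (Prod.mk (X ω) ⁻¹' S) + ε) ≤ {i | (X ω, Y ω i) ∈ S}.ncard}
      ≤ exp (-2 * ε ^ 2 * n) := by
  set B : Set (A × (Fin n → E)) :=
    {x | n * (κ.real (Prod.mk x.1 ⁻¹' S) + ε) ≤ {i | (x.1, x.2 i) ∈ S}.ncard}
  have hcount : Measurable fun x : A × (Fin n → E) => ({i | (x.1, x.2 i) ∈ S}.ncard : ℝ) := by
    simp only [Set.ncard_setOf_mem_eq_sum_indicator]
    exact Finset.measurable_sum _ fun i _ => (measurable_one.indicator hS).comp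
      (measurable_fst.prodMk ((measurable_pi_apply i).comp measurable_snd))
  have hB : MeasurableSet B :=
    measurableSet_le ((((measurable_measure_prodMk_left hS).ennreal_toReal).comp
      measurable_fst).add_const ε |>.const_mul _) hcount
  have hjoint : P.map (fun ω => (X ω, Y ω)) = (P.map X).prod (Measure.pi fun _ => κ) := by
    rw [← hYlaw]
    exact (indepFun_iff_map_prod_eq_prod_map_map hX.aemeasurable hY.aemeasurable).mp hXY
  have : IsProbabilityMeasure (P.map X) := Measure.isProbabilityMeasure_map hX.aemeasurable
  have hsection : ∀ a, (Measure.pi fun _ : Fin n => κ) (Prod.mk a ⁻¹' B)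
      ≤ ENNReal.ofReal (exp (-2 * ε ^ 2 * n)) := fun a =>
    (ENNReal.le_ofReal_iff_toReal_le (measure_ne_top _ _) (exp_pos _).le).mpr
      (measureReal_pi_ncard_ge_le κ (measurable_prodMk_left hS) n hε)
  have hbound : P {ω | n * (κ.real (Prod.mk (X ω) ⁻¹' S) + ε) ≤ {i | (X ω, Y ω i) ∈ S}.ncard}
      ≤ ENNReal.ofReal (exp (-2 * ε ^ 2 * n)) :=
    calc P ((fun ω => (X ω, Y ω)) ⁻¹' B)
        = ∫⁻ a, (Measure.pi fun _ : Fin n => κ) (Prod.mk a ⁻¹' B) ∂(P.map X) := by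
          rw [← Measure.map_apply (hX.prodMk hY) hB, hjoint, Measure.prod_apply hB]
      _ ≤ ∫⁻ _, ENNReal.ofReal (exp (-2 * ε ^ 2 * n)) ∂(P.map X) := lintegral_mono hsection
      _ = ENNReal.ofReal (exp (-2 * ε ^ 2 * n)) := by
          rw [lintegral_const, measure_univ, mul_one]
  exact (ENNReal.le_ofReal_iff_toReal_le (measure_ne_top _ _) (exp_pos _).le).mp hbound

section IndependentFamily

variable {Ω ι E : Type*} [MeasurableSpace Ω] [MeasurableSpace E] {P : Measure Ω}
  {W : ι → Ω → E}

lemma ProbabilityTheory.iIndepFun.map_precomp_eq_pi {ι' : Type*} [Fintype ι']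
    (hW : iIndepFun W P) (hWmeas : ∀ i, Measurable (W i)) {μ : Measure E}
    (hWlaw : ∀ i, P.map (W i) = μ) {g : ι' → ι} (hg : g.Injective) :
    P.map (fun ω i => W (g i) ω) = Measure.pi fun _ => μ := by
  rw [(hW.precomp hg).map_fun_eq_pi_map fun i => (hWmeas (g i)).aemeasurable]
  simp only [hWlaw]

lemma ProbabilityTheory.iIndepFun.indepFun_precomp_of_ne {ι₁ ι₂ : Type*} [Fintype ι₁]
    [Fintype ι₂] (hW : iIndepFun W P) (hWmeas : ∀ i, Measurable (W i)) {g₁ : ι₁ → ι}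
    {g₂ : ι₂ → ι} (hg : ∀ i j, g₁ i ≠ g₂ j) :
    IndepFun (fun ω i => W (g₁ i) ω) (fun ω j => W (g₂ j) ω) P := by
  classical
  have hdisj : Disjoint (Finset.univ.image g₁) (Finset.univ.image g₂) := by
    simp only [Finset.disjoint_left, Finset.mem_image, Finset.mem_univ, true_and]
    rintro _ ⟨i, rfl⟩ ⟨j, hj⟩
    exact hg i j hj.symm
  exact (hW.indepFun_finset _ _ hdisj hWmeas).comp
    (measurable_pi_lambda _ fun i => measurable_pi_apply ⟨g₁ i, by simp⟩)
    (measurable_pi_lambda _ fun j => measurable_pi_apply ⟨g₂ j, by simp⟩)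

end IndependentFamily

lemma exists_mem_erase_zero_of_selected_le {G : Finset ℝ} (hG0 : 0 ∈ G) {phat cov : ℝ → ℝ}
    (hphat0 : phat 0 = 1) (hcov0 : cov 0 = 1) {α ε : ℝ} (hα : 0 < α) (hε : 0 ≤ ε)
    (hsel : cov (sSup {τ | τ ∈ G ∧ 1 - α ≤ phat τ}) ≤ 1 - α - ε) :
    ∃ τ ∈ G.erase 0, cov τ + ε ≤ phat τ := by
  set T := {τ | τ ∈ G ∧ 1 - α ≤ phat τ}
  have hT : sSup T ∈ T :=
    Set.Nonempty.csSup_mem ⟨0, hG0, by linarith⟩ (G.finite_toSet.subset fun _ h => h.1)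
  have hne : sSup T ≠ 0 := by
    intro h
    rw [h, hcov0] at hsel
    linarith
  exact ⟨sSup T, Finset.mem_erase.mpr ⟨hne, hT.1⟩, by linarith [hT.2]⟩

theorem measureReal_selected_coverage_le {Ω A E : Type*} [MeasurableSpace Ω]
    [MeasurableSpace A] [MeasurableSpace E] {P : Measure Ω} [IsProbabilityMeasure P]
    {κ : Measure E} [IsProbabilityMeasure κ] {n K : ℕ} (hn : 1 ≤ n) {D₁ : Ω → A}
    {D₂ : Ω → Fin n → E} (hD₁ : Measurable D₁) (hD₂ : Measurable D₂)
    (hindep : IndepFun D₁ D₂ P) (hD₂law : P.map D₂ = Measure.pi fun _ => κ) {G : Finset ℝ}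
    (hG0 : 0 ∈ G) (hGcard : G.card = K + 1) {S : ℝ → Set (A × E)}
    (hS : ∀ τ ∈ G, MeasurableSet (S τ)) (hS0 : S 0 = Set.univ) {α ε : ℝ} (hα : 0 < α)
    (hε : 0 ≤ ε) :
    P.real {ω | κ.real (Prod.mk (D₁ ω) ⁻¹'
        S (sSup {τ | τ ∈ G ∧ 1 - α ≤ {i | (D₁ ω, D₂ ω i) ∈ S τ}.ncard / n})) ≤ 1 - α - ε}
      ≤ K * exp (-2 * ε ^ 2 * n) := by
  have hn' : (0 : ℝ) < n := by exact_mod_cast hn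
  set deviates : ℝ → Set Ω := fun τ =>
    {ω | n * (κ.real (Prod.mk (D₁ ω) ⁻¹' S τ) + ε) ≤ {i | (D₁ ω, D₂ ω i) ∈ S τ}.ncard}
  have hbad : {ω | κ.real (Prod.mk (D₁ ω) ⁻¹'
      S (sSup {τ | τ ∈ G ∧ 1 - α ≤ {i | (D₁ ω, D₂ ω i) ∈ S τ}.ncard / n})) ≤ 1 - α - ε}
      ⊆ ⋃ τ ∈ G.erase 0, deviates τ := by
    intro ω hω
    obtain ⟨τ, hτ, hdev⟩ := exists_mem_erase_zero_of_selected_le hG0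
      (phat := fun τ => {i | (D₁ ω, D₂ ω i) ∈ S τ}.ncard / n)
      (cov := fun τ => κ.real (Prod.mk (D₁ ω) ⁻¹' S τ))
      (by simp [hS0, hn'.ne']) (by simp [hS0]) hα hε hω
    exact Set.mem_biUnion hτ ((le_div_iff₀' hn').mp hdev)
  calc _ ≤ P.real (⋃ τ ∈ G.erase 0, deviates τ) := measureReal_mono hbad (measure_ne_top _ _)
    _ ≤ ∑ τ ∈ G.erase 0, P.real (deviates τ) := measureReal_biUnion_finset_le _ _
    _ ≤ ∑ _τ ∈ G.erase 0, exp (-2 * ε ^ 2 * n) := Finset.sum_le_sum fun τ hτ =>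
          measureReal_ncard_ge_le_of_indepFun hD₁ hD₂ hindep hD₂law
            (hS τ (Finset.mem_of_mem_erase hτ)) hε
    _ = K * exp (-2 * ε ^ 2 * n) := by
          rw [Finset.sum_const, Finset.card_erase_of_mem hG0, hGcard, nsmul_eq_mul]
          simp

def coverageRegion {A X : Type*} (L U : A × X → EReal) : Set (A × (X × ℝ)) :=
  {z | L (z.1, z.2.1) ≤ z.2.2 ∧ (z.2.2 : EReal) ≤ U (z.1, z.2.1)}

lemma measurableSet_coverageRegion {A X : Type*} [MeasurableSpace A] [MeasurableSpace X]
    {L U : A × X → EReal} (hL : Measurable L) (hU : Measurable U) :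
    MeasurableSet (coverageRegion L U) := by
  have hpair : Measurable fun z : A × (X × ℝ) => (z.1, z.2.1) :=
    measurable_fst.prodMk measurable_snd.fst
  have hy : Measurable fun z : A × (X × ℝ) => (z.2.2 : EReal) :=
    measurable_snd.snd.coe_real_ereal
  exact (measurableSet_le (hL.comp hpair) hy).inter (measurableSet_le hy (hU.comp hpair))

/-- **Theorem 2, PAV guarantee.** Training data `D₁` (the first
`n₁` i.i.d. pairs), holdout data `D₂` (the next `n₂` pairs), and a test pair
(the last pair) are i.i.d. with law `μ` on `ℝ^d × ℝ`.  `G ⊆ [0,1]` is a finite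
grid with `0 ∈ G` and `|G| = K + 1`; for each `τ ∈ G`, `L_τ, U_τ` are
measurable `[-∞,∞]`-valued interval bounds fit on `D₁`, with `L₀ ≡ -∞` and
`U₀ ≡ +∞`.  With `p̂(τ)` the empirical coverage on `D₂`,
`τ̂ = max{τ ∈ G : p̂(τ) ≥ 1-α}`, and `p(D)` the conditional coverage
probability of the selected interval given the data (i.e. `μ` of the selected
region with `D₁` and `τ̂` plugged in), for every `ε > 0`,
`P(p(D) ≤ 1 - α - ε) ≤ K·exp(-2ε²n₂)`. -/
theorem pav_guarantee
    {Ω : Type*} [MeasurableSpace Ω] (P : Measure Ω) [IsProbabilityMeasure P]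
    (d n₁ n₂ K : ℕ) (hn₂ : 1 ≤ n₂)
    (μ : Measure ((Fin d → ℝ) × ℝ)) [IsProbabilityMeasure μ]
    (W : Fin (n₁ + n₂ + 1) → Ω → (Fin d → ℝ) × ℝ)
    (hWmeas : ∀ i, Measurable (W i))
    (hWindep : iIndepFun W P)
    (hWlaw : ∀ i, P.map (W i) = μ)
    (G : Finset ℝ) (hG0 : (0 : ℝ) ∈ G)
    (hGcard : G.card = K + 1)
    (L U : ℝ → (Fin n₁ → (Fin d → ℝ) × ℝ) × (Fin d → ℝ) → EReal)
    (hLmeas : ∀ τ ∈ G, Measurable (L τ)) (hUmeas : ∀ τ ∈ G, Measurable (U τ))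
    (hL0 : ∀ q, L 0 q = ⊥) (hU0 : ∀ q, U 0 q = ⊤)
    (α : ℝ) (hα : α ∈ Set.Ioo (0 : ℝ) 1)
    (D₁ : Ω → Fin n₁ → (Fin d → ℝ) × ℝ)
    (hD₁ : D₁ = fun ω (i : Fin n₁) => W (i.castLE (by omega)) ω)
    (D₂ : Ω → Fin n₂ → (Fin d → ℝ) × ℝ)
    (hD₂ : D₂ = fun ω (i : Fin n₂) => W ⟨n₁ + i.1, by have := i.2; omega⟩ ω)
    (phat : ℝ → Ω → ℝ)
    (hphat : phat = fun τ ω =>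
      (({i : Fin n₂ | L τ (D₁ ω, (D₂ ω i).1) ≤ ((D₂ ω i).2 : EReal) ∧
          ((D₂ ω i).2 : EReal) ≤ U τ (D₁ ω, (D₂ ω i).1)}).ncard : ℝ) / n₂)
    (τhat : Ω → ℝ)
    (hτhat : τhat = fun ω => sSup {τ : ℝ | τ ∈ G ∧ 1 - α ≤ phat τ ω})
    (p : Ω → ℝ)
    (hp : p = fun ω => (μ {q : (Fin d → ℝ) × ℝ |
      L (τhat ω) (D₁ ω, q.1) ≤ (q.2 : EReal) ∧
        (q.2 : EReal) ≤ U (τhat ω) (D₁ ω, q.1)}).toReal)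
    (ε : ℝ) (hε : 0 < ε) :
    (P {ω | p ω ≤ 1 - α - ε}).toReal ≤ K * Real.exp (-2 * ε ^ 2 * n₂) := by
  have hindep : IndepFun D₁ D₂ P :=
    hD₁ ▸ hD₂ ▸ hWindep.indepFun_precomp_of_ne hWmeas fun i j h => by
      simp [Fin.ext_iff] at h; omega
  have hD₂law : P.map D₂ = Measure.pi fun _ => μ :=
    hD₂ ▸ hWindep.map_precomp_eq_pi hWmeas hWlaw fun i j h => by
      simpa [Fin.ext_iff] using h
  have hS0 : coverageRegion (L 0) (U 0) = Set.univ := by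
    ext; simp [coverageRegion, hL0, hU0]
  -- After substitution `phat`, `τhat` and `p` are, up to unfolding `coverageRegion`, the
  -- empirical coverage, selected level and true coverage of the abstract statement.
  subst hp hτhat hphat
  exact measureReal_selected_coverage_le hn₂ (hD₁ ▸ measurable_pi_lambda _ fun _ => hWmeas _)
    (hD₂ ▸ measurable_pi_lambda _ fun _ => hWmeas _) hindep hD₂law hG0 hGcard
    (fun τ hτ => measurableSet_coverageRegion (hLmeas τ hτ) (hUmeas τ hτ)) hS0 hα.1 hε.le
end

section
/- Let μ be a probability measure on ℝ^d × ℝ, let (X'₁,Y'₁),…,(X'_n,Y'_n),(X,Y) be i.i.d. with law μ, let G ⊆ [0,1] be a finite set with 0 ∈ G and |G| = K+1, and for each τ ∈ G let C_τ ⊆ ℝ^d × ℝ be a fixed measurable set with C₀ = ℝ^d × ℝ. Let α ∈ (0,1), let p̂(τ) = (1/n)·#{ i ≤ n : (X'ᵢ,Y'ᵢ) ∈ C_τ }, and let τ̂ = max{ τ ∈ G : p̂(τ) ≥ 1−α } (well-defined since p̂(0) = 1). Then for every ε > 0, P( μ(C_{τ̂}) ≤ 1 − α − ε ) ≤ K·exp(−2ε²n),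 where τ̂ is a random variable depending on (X'₁,Y'₁),…,(X'_n,Y'_n). -/
/-!
If the selected level `τ̂` has true coverage at most `1 - α - ε`, then some grid level `τ` with
`μ(C_τ) ≤ 1 - α - ε` passed the empirical test `p̂(τ) ≥ 1 - α`. For a fixed such `τ`, `n p̂(τ)` is a
sum of `n` independent Bernoulli(`μ(C_τ)`) variables, so Hoeffding's inequality bounds this by
`exp(-2ε²n)`. Since `C₀` is everything, `τ = 0` is never such a level, and a union bound over the
remaining `K` levels concludes.
-/

open MeasureTheory ProbabilityTheory Finset

theorem measureReal_bad_of_selected_le_card_mul {Ω ι : Type*} [MeasurableSpace Ω]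
    (P : Measure Ω) [IsFiniteMeasure P] (G : Finset ι) (Q : ι → Ω → Prop) (bad : ι → Prop)
    [DecidablePred bad] (sel : Ω → ι) (hsel : ∀ ω, sel ω ∈ G ∧ Q (sel ω) ω) {B : ℝ}
    (hB : ∀ τ ∈ G, bad τ → P.real {ω | Q τ ω} ≤ B) :
    P.real {ω | bad (sel ω)} ≤ #{τ ∈ G | bad τ} * B := by
  have hcover : {ω | bad (sel ω)} ⊆ ⋃ τ ∈ {τ ∈ G | bad τ}, {ω | Q τ ω} := fun ω hω =>
    Set.mem_biUnion (mem_filter.mpr ⟨(hsel ω).1, hω⟩) (hsel ω).2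
  calc P.real {ω | bad (sel ω)}
      ≤ ∑ τ ∈ {τ ∈ G | bad τ}, P.real {ω | Q τ ω} :=
        (measureReal_mono hcover (measure_ne_top _ _)).trans (measureReal_biUnion_finset_le _ _)
    _ ≤ #{τ ∈ G | bad τ} * B := by
        simpa using sum_le_card_nsmul _ _ B fun τ hτ =>
          hB τ (mem_filter.mp hτ).1 (mem_filter.mp hτ).2

theorem measureReal_card_filter_mem_ge_le {Ω ι E : Type*} [MeasurableSpace Ω] [MeasurableSpace E]
    (P : Measure Ω) [IsProbabilityMeasure P] {Z : ι → Ω → E} (hmeas : ∀ i, Measurable (Z i))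
    (hindep : iIndepFun Z P) {A : Set E} [DecidablePred (· ∈ A)] (hA : MeasurableSet A) {p : ℝ}
    (hp : ∀ i, P.real (Z i ⁻¹' A) = p) (s : Finset ι) {ε : ℝ} (hε : 0 ≤ ε) :
    P.real {ω | #s * (p + ε) ≤ #{i ∈ s | Z i ω ∈ A}} ≤ Real.exp (-2 * ε ^ 2 * #s) := by
  set X : ι → Ω → ℝ := fun i ω => A.indicator 1 (Z i ω) - p with hX
  have hsubG : ∀ i ∈ s, HasSubgaussianMGF (X i) ((‖(1 : ℝ) - 0‖₊ / 2) ^ 2) P := fun i _ => by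
    have hmean : P[fun ω => A.indicator 1 (Z i ω)] = p := by
      rw [← hp i, ← integral_indicator_one (hmeas i hA)]; rfl
    simpa [hmean] using
      hasSubgaussianMGF_of_mem_Icc (X := fun ω => A.indicator 1 (Z i ω)) (a := 0) (b := 1)
      ((measurable_const.indicator hA).comp (hmeas i)).aemeasurable
      (ae_of_all P fun ω => by by_cases h : Z i ω ∈ A <;> simp [h])
  have hindepX : iIndepFun X P :=
    hindep.comp _ fun _ => (measurable_const.indicator hA).sub_const p
  have hsum : ∀ ω, ∑ i ∈ s, X i ω = #{i ∈ s | Z i ω ∈ A} - #s * p := fun ω => by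
    simp [hX, Set.indicator_apply, sum_boole]
  have hevent : {ω | #s * (p + ε) ≤ #{i ∈ s | Z i ω ∈ A}} = {ω | #s * ε ≤ ∑ i ∈ s, X i ω} := by
    ext ω; simp only [Set.mem_ofPred, hsum]; constructor <;> intro h <;> linarith
  rw [hevent]
  refine (HasSubgaussianMGF.measure_sum_ge_le_of_iIndepFun hindepX hsubG
    (by positivity)).trans_eq ?_
  congr 1
  -- Mathlib's bound divides by the variance proxy `#s / 4`, which is `0` (junk) when `s = ∅`.
  rcases (#s).eq_zero_or_pos with hs | hs
  · simp [hs]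
  · simp only [sum_const, nsmul_eq_mul]
    push_cast
    field_simp
    norm_num

theorem csSup_setOf_mem_and_mem {β : Type*} [ConditionallyCompleteLinearOrder β] {G : Finset β}
    {R : β → Prop} {a : β} (ha : a ∈ G) (hRa : R a) :
    sSup {τ | τ ∈ G ∧ R τ} ∈ {τ | τ ∈ G ∧ R τ} :=
  Set.Nonempty.csSup_mem ⟨a, ha, hRa⟩ (G.finite_toSet.subset fun _ hτ => hτ.1)

theorem pav_guarantee_fixed_predictor_general
    {Ω : Type*} [MeasurableSpace Ω] (P : Measure Ω) [IsProbabilityMeasure P]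
    (d n K : ℕ) (hn : 1 ≤ n)
    (μ : Measure ((Fin d → ℝ) × ℝ)) [IsProbabilityMeasure μ]
    (Z : Fin (n + 1) → Ω → (Fin d → ℝ) × ℝ)
    (hZmeas : ∀ i, Measurable (Z i))
    (hZindep : iIndepFun Z P)
    (hZlaw : ∀ i, P.map (Z i) = μ)
    (G : Finset ℝ) (hG0 : (0 : ℝ) ∈ G)
    (hGcard : G.card = K + 1)
    (C : ℝ → Set ((Fin d → ℝ) × ℝ))
    (hCmeas : ∀ τ ∈ G, MeasurableSet (C τ))
    (hC0 : C 0 = Set.univ)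
    (α : ℝ) (hα : α ∈ Set.Ioo (0 : ℝ) 1)
    (phat : ℝ → Ω → ℝ)
    (hphat : phat = fun τ ω =>
      (({i : Fin n | Z i.castSucc ω ∈ C τ}).ncard : ℝ) / n)
    (τhat : Ω → ℝ)
    (hτhat : τhat = fun ω => sSup {τ : ℝ | τ ∈ G ∧ 1 - α ≤ phat τ ω})
    (ε : ℝ) (hε : 0 < ε) :
    (P {ω | (μ (C (τhat ω))).toReal ≤ 1 - α - ε}).toReal ≤
      K * Real.exp (-2 * ε ^ 2 * n) := by
  classical
  have hn_pos : (0 : ℝ) < n := by exact_mod_cast hn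
  have hphat_eq : ∀ τ ω, phat τ ω = #{i : Fin n | Z i.castSucc ω ∈ C τ} / n := fun τ ω => by
    simp [hphat, Set.ncard_eq_toFinset_card']
  have hτhat_mem : ∀ ω, τhat ω ∈ G ∧ 1 - α ≤ phat (τhat ω) ω := fun ω => by
    rw [hτhat]
    exact csSup_setOf_mem_and_mem hG0 (by simp [hphat_eq, hC0, hn_pos.ne', hα.1.le])
  have hbad_card : #{τ ∈ G | μ.real (C τ) ≤ 1 - α - ε} ≤ K := by
    have hgood0 : ¬ μ.real (C 0) ≤ 1 - α - ε := by simp [hC0]; linarith [hα.1]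
    have := card_lt_card (filter_ssubset (p := fun τ => μ.real (C τ) ≤ 1 - α - ε)
      |>.mpr ⟨0, hG0, hgood0⟩)
    omega
  have htail : ∀ τ ∈ G, μ.real (C τ) ≤ 1 - α - ε →
      P.real {ω | 1 - α ≤ phat τ ω} ≤ Real.exp (-2 * ε ^ 2 * n) := fun τ hτ hbad => by
    calc P.real {ω | 1 - α ≤ phat τ ω}
        ≤ P.real {ω | n * (μ.real (C τ) + ε) ≤ #{i : Fin n | Z i.castSucc ω ∈ C τ}} := by
          refine measureReal_mono (fun ω hω => ?_) (measure_ne_top _ _)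
          simp only [Set.mem_ofPred, hphat_eq, le_div_iff₀ hn_pos] at hω ⊢
          nlinarith
      _ ≤ Real.exp (-2 * ε ^ 2 * n) := by
          have h := measureReal_card_filter_mem_ge_le P (fun i => hZmeas (Fin.castSucc i))
            (hZindep.precomp (Fin.castSucc_injective n)) (hCmeas τ hτ)
            (fun i => by rw [← map_measureReal_apply (hZmeas _) (hCmeas τ hτ), hZlaw]) univ hε.le
          rwa [card_univ, Fintype.card_fin] at h
  refine (measureReal_bad_of_selected_le_card_mul P G (fun τ ω => 1 - α ≤ phat τ ω)
    (fun τ => μ.real (C τ) ≤ 1 - α - ε) τhat hτhat_mem htail).trans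
    (mul_le_mul_of_nonneg_right ?_ (Real.exp_nonneg _))
  exact_mod_cast hbad_card

/-- **PAV guarantee, fixed predictor.** With i.i.d. samples
`(X'₁,Y'₁),…,(X'ₙ,Y'ₙ),(X,Y)` of law `μ` on `ℝ^d × ℝ`, a finite grid
`G ⊆ [0,1]` with `0 ∈ G` and `|G| = K + 1`, fixed measurable regions `C_τ`
with `C₀` everything, empirical frequencies `p̂(τ)` computed from the first
`n` samples, and `τ̂ = max{τ ∈ G : p̂(τ) ≥ 1 - α}`, for every `ε > 0`,
`P(μ(C_τ̂) ≤ 1 - α - ε) ≤ K·exp(-2ε²n)`. -/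
theorem pav_guarantee_fixed_predictor
    {Ω : Type*} [MeasurableSpace Ω] (P : Measure Ω) [IsProbabilityMeasure P]
    (d n K : ℕ) (hn : 1 ≤ n)
    (μ : Measure ((Fin d → ℝ) × ℝ)) [IsProbabilityMeasure μ]
    (Z : Fin (n + 1) → Ω → (Fin d → ℝ) × ℝ)
    (hZmeas : ∀ i, Measurable (Z i))
    (hZindep : iIndepFun Z P)
    (hZlaw : ∀ i, P.map (Z i) = μ)
    (G : Finset ℝ) (hGsub : ↑G ⊆ Set.Icc (0 : ℝ) 1) (hG0 : (0 : ℝ) ∈ G)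
    (hGcard : G.card = K + 1)
    (C : ℝ → Set ((Fin d → ℝ) × ℝ))
    (hCmeas : ∀ τ ∈ G, MeasurableSet (C τ))
    (hC0 : C 0 = Set.univ)
    (α : ℝ) (hα : α ∈ Set.Ioo (0 : ℝ) 1)
    (phat : ℝ → Ω → ℝ)
    (hphat : phat = fun τ ω =>
      (({i : Fin n | Z i.castSucc ω ∈ C τ}).ncard : ℝ) / n)
    (τhat : Ω → ℝ)
    (hτhat : τhat = fun ω => sSup {τ : ℝ | τ ∈ G ∧ 1 - α ≤ phat τ ω})
    (ε : ℝ) (hε : 0 < ε) :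
    (P {ω | (μ (C (τhat ω))).toReal ≤ 1 - α - ε}).toReal ≤
      K * Real.exp (-2 * ε ^ 2 * n) :=
  pav_guarantee_fixed_predictor_general P d n K hn μ Z hZmeas hZindep hZlaw G hG0 hGcard C hCmeas
    hC0 α hα phat hphat τhat hτhat ε hε
end
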